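/- Fix positive integers M_t, J, Q with M_t ≥ J(Q−1) + 1 and set A = M_t − J(Q−1) + 1. For positive integers K, L satisfying K L ≤ M_t − J(Q−1), define T(K, L) = K ∫₀^∞ (1 − e^{−z ((L+1)/2) (A − K L)/K}) / (z F(z,4)) dz. Then for every feasible pair (K, L) there exists a feasible K′ (i.e. a positive integer K′ ≤ M_t − J(Q−1)) with T(K′, 1) ≥ T(K, L); that is, the maximum of T over all feasible pairs is attained with cluster size L = 1. -/

import Mathlib

/-!
Write `I(b) = ∫₀^∞ (1 - e^{-bz}) / (z F(z,4)) dz`. With `a = (A - KL)/(KL)` and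
`c = L(L+1)/2` one has `T(K,L) = K·I(c a)` and `T(KL,1) = KL·I(a)`, so the feasible `K' = KL`
wins as soon as `I(c a) ≤ L·I(a)`. Since `F(z,α)/z^{2/α}` is decreasing, `F(cz,4) ≤ √c F(z,4)`,
and the substitution `w = cz` gives `I(c a) ≤ √c I(a) ≤ L I(a)`.
-/

open MeasureTheory

/-- The paper's function `F(z,α) = e^{−z} + z^{2/α} ∫₀^z t^{−2/α} e^{−t} dt`
(lower incomplete gamma convention). -/
noncomputable def paperF (z α : ℝ) : ℝ :=
  Real.exp (-z) + z ^ (2 / α) * ∫ t in Set.Ioo (0 : ℝ) z, t ^ (-(2 / α)) * Real.exp (-t)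

/-- The (normalized) approximate communication area spectral efficiency at pathloss
exponent `α = 4`, with `K` served users per cell, communication cooperative cluster size
`L`, and `A = M_t − J(Q−1) + 1` available spatial degrees of freedom: the MISR gain factor
is `(L+1)/2` and `T(K,L) = K ∫₀^∞ (1 − e^{−z((L+1)/2)(A − KL)/K})/(z F(z,4)) dz`. -/
noncomputable def commASE (Mt J Q K L : ℕ) : ℝ :=
  (K : ℝ) * ∫ z in Set.Ioi (0 : ℝ),
    (1 - Real.exp (-(z * (((L : ℝ) + 1) / 2) *
        ((((Mt : ℝ) - (J : ℝ) * ((Q : ℝ) - 1) + 1) - (K : ℝ) * (L : ℝ)) / (K : ℝ)))))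
      / (z * paperF z 4)

open Set Real

noncomputable def lowerGamma (a z : ℝ) : ℝ := ∫ t in Ioo 0 z, t ^ (a - 1) * exp (-t)

section LowerGamma

variable {a : ℝ}

theorem integrableOn_rpow_mul_exp_neg_Ioi (ha : 0 < a) :
    IntegrableOn (fun t : ℝ => t ^ (a - 1) * exp (-t)) (Ioi 0) := by
  simpa only [mul_comm] using GammaIntegral_convergent ha

theorem intervalIntegrable_rpow_mul_exp_neg (ha : 0 < a) {v w : ℝ} (hv : 0 ≤ v) (hw : 0 ≤ w) :
    IntervalIntegrable (fun t : ℝ => t ^ (a - 1) * exp (-t)) volume v w := by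
  have h := integrableOn_rpow_mul_exp_neg_Ioi ha
  exact ⟨h.mono_set (Ioc_subset_Ioi_self.trans (Ioi_subset_Ioi hv)),
    h.mono_set (Ioc_subset_Ioi_self.trans (Ioi_subset_Ioi hw))⟩

theorem lowerGamma_nonneg (a z : ℝ) : 0 ≤ lowerGamma a z :=
  setIntegral_nonneg measurableSet_Ioo fun _ ht =>
    mul_nonneg (rpow_nonneg ht.1.le _) (exp_nonneg _)

theorem lowerGamma_eq_intervalIntegral {z : ℝ} (hz : 0 ≤ z) :
    lowerGamma a z = ∫ t in (0)..z, t ^ (a - 1) * exp (-t) := by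
  rw [intervalIntegral.integral_of_le hz, integral_Ioc_eq_integral_Ioo, lowerGamma]

theorem monotone_lowerGamma (ha : 0 < a) : Monotone (lowerGamma a) := fun _ _ hvw =>
  setIntegral_mono_set ((integrableOn_rpow_mul_exp_neg_Ioi ha).mono_set Ioo_subset_Ioi_self)
    (ae_restrict_of_forall_mem measurableSet_Ioo fun _ ht =>
      mul_nonneg (rpow_nonneg ht.1.le _) (exp_nonneg _))
    (Ioo_subset_Ioo_right hvw).eventuallyLE

theorem lowerGamma_sub_le (ha : 0 < a) (ha1 : a ≤ 1) {v w : ℝ} (hv : 0 < v) (hvw : v ≤ w) :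
    lowerGamma a w - lowerGamma a v ≤ v ^ (a - 1) * (exp (-v) - exp (-w)) := by
  have hint (z : ℝ) (hz : 0 ≤ z) := intervalIntegrable_rpow_mul_exp_neg ha le_rfl hz
  rw [lowerGamma_eq_intervalIntegral (hv.le.trans hvw), lowerGamma_eq_intervalIntegral hv.le,
    intervalIntegral.integral_interval_sub_left (hint w (hv.le.trans hvw)) (hint v hv.le)]
  calc ∫ t in v..w, t ^ (a - 1) * exp (-t)
      ≤ ∫ t in v..w, v ^ (a - 1) * exp (-t) :=
        intervalIntegral.integral_mono_on hvw
          (intervalIntegrable_rpow_mul_exp_neg ha hv.le (hv.le.trans hvw))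
          ((by fun_prop : Continuous _).intervalIntegrable _ _) fun t ht =>
            mul_le_mul_of_nonneg_right (rpow_le_rpow_of_nonpos hv ht.1 (by linarith))
              (exp_nonneg _)
    _ = v ^ (a - 1) * (exp (-v) - exp (-w)) := by
        rw [intervalIntegral.integral_const_mul, intervalIntegral.integral_comp_neg, integral_exp]

end LowerGamma

section PaperF

variable {α : ℝ}

theorem paperF_eq (z : ℝ) :
    paperF z α = exp (-z) + z ^ (2 / α) * lowerGamma (1 - 2 / α) z := by
  simp only [paperF, lowerGamma, sub_sub_cancel_left]

theorem paperF_pos {z : ℝ} (hz : 0 ≤ z) : 0 < paperF z α := by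
  rw [paperF_eq]
  exact add_pos_of_pos_of_nonneg (exp_pos _)
    (mul_nonneg (rpow_nonneg hz _) (lowerGamma_nonneg _ _))

theorem measurable_paperF (hα : 2 < α) : Measurable fun z => paperF z α := by
  have hs : 0 < 1 - 2 / α := by
    rw [sub_pos, div_lt_one (by linarith)]
    exact hα
  simp only [paperF_eq]
  exact (measurable_neg.exp).add
    ((measurable_id.pow_const _).mul (monotone_lowerGamma hs).measurable)

theorem paperF_div_rpow_eq {z : ℝ} (hz : 0 < z) :
    paperF z α / z ^ (2 / α) = exp (-z) * z ^ (-(2 / α)) + lowerGamma (1 - 2 / α) z := by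
  rw [paperF_eq, add_div, mul_div_cancel_left₀ _ (rpow_pos_of_pos hz _).ne', rpow_neg hz.le,
    div_eq_mul_inv]

-- The derivative is `-(2/α) e^{-z} z^{-2/α-1} < 0`.
theorem antitoneOn_paperF_div_rpow (hα : 2 < α) :
    AntitoneOn (fun z => paperF z α / z ^ (2 / α)) (Ioi 0) := by
  intro v hv w _ hvw
  have hs : 0 < 2 / α := by positivity
  have hs1 : 2 / α < 1 := (div_lt_one (by linarith)).mpr hα
  have hgamma := lowerGamma_sub_le (a := 1 - 2 / α) (by linarith) (by linarith) hv hvw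
  rw [sub_sub_cancel_left] at hgamma
  have hrpow : w ^ (-(2 / α)) ≤ v ^ (-(2 / α)) :=
    rpow_le_rpow_of_nonpos hv hvw (by linarith)
  simp only [paperF_div_rpow_eq hv, paperF_div_rpow_eq (lt_of_lt_of_le hv hvw)]
  nlinarith [exp_nonneg (-w)]

theorem paperF_mul_le {c z : ℝ} (hα : 2 < α) (hc : 1 ≤ c) (hz : 0 < z) :
    paperF (c * z) α ≤ c ^ (2 / α) * paperF z α := by
  have hc0 : 0 < c := by linarith
  have h := antitoneOn_paperF_div_rpow hα (mem_Ioi.mpr hz) (mem_Ioi.mpr (mul_pos hc0 hz))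
    (le_mul_of_one_le_left hz.le hc)
  simp only at h
  rw [mul_rpow hc0.le hz.le, div_le_div_iff₀ (by positivity) (by positivity)] at h
  nlinarith [rpow_pos_of_pos hz (2 / α)]

end PaperF

-- After the substitution `w = c z` the left side is `∫ h(w) / (w φ(w/c))`.
theorem setIntegral_Ioi_comp_mul_div_le {φ h : ℝ → ℝ} {c k : ℝ} (hc : 1 ≤ c)
    (hφ : Measurable φ) (hφ_pos : ∀ z, 0 < z → 0 < φ z)
    (hφ_le : ∀ z, 0 < z → φ (c * z) ≤ k * φ z) (hh : Monotone h) (hh0 : 0 ≤ h 0) :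
    ∫ z in Ioi 0, h (c * z) / (z * φ z) ≤ k * ∫ z in Ioi 0, h z / (z * φ z) := by
  have hc0 : 0 < c := by linarith
  have hk : 0 < k := pos_of_mul_pos_left
    ((hφ_pos _ (mul_pos hc0 one_pos)).trans_le (hφ_le 1 one_pos)) (hφ_pos 1 one_pos).le
  have hh_nonneg : ∀ z, 0 ≤ z → 0 ≤ h z := fun z hz => hh0.trans (hh hz)
  have hq : ∀ z ∈ Ioi (0 : ℝ), 0 ≤ h z / (z * φ z) := fun z hz =>
    div_nonneg (hh_nonneg z (le_of_lt hz)) (mul_pos hz (hφ_pos z hz)).le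
  by_cases hint : IntegrableOn (fun z => h (c * z) / (z * φ z)) (Ioi 0)
  swap
  · rw [integral_undef hint]
    exact mul_nonneg hk.le (setIntegral_nonneg measurableSet_Ioi hq)
  have hq_int : IntegrableOn (fun z => h z / (z * φ z)) (Ioi 0) := by
    refine hint.mono' (hh.measurable.div (measurable_id.mul hφ)).aestronglyMeasurable ?_
    refine ae_restrict_of_forall_mem measurableSet_Ioi fun z hz => ?_
    rw [Real.norm_of_nonneg (hq z hz)]
    gcongr
    · exact (mul_pos hz (hφ_pos z hz)).le
    · exact hh (le_mul_of_one_le_left (le_of_lt hz) hc)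
  have hsubst : ∫ z in Ioi 0, h (c * z) / (z * φ z) = ∫ w in Ioi 0, h w / (w * φ (w / c)) := by
    have := integral_comp_mul_left_Ioi' (fun w => h w / (w * φ (w / c))) 0 hc0
    rw [mul_zero, smul_eq_mul, ← integral_const_mul] at this
    rw [← this]
    refine setIntegral_congr_fun measurableSet_Ioi fun z _ => ?_
    simp only [mul_div_cancel_left₀ z hc0.ne']
    field_simp
  rw [hsubst, ← integral_const_mul]
  refine integral_mono_of_nonneg (ae_restrict_of_forall_mem measurableSet_Ioi fun w hw => ?_)
    (hq_int.const_mul k) (ae_restrict_of_forall_mem measurableSet_Ioi fun w hw => ?_)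
  · exact div_nonneg (hh_nonneg w hw.le)
      (mul_pos hw (hφ_pos _ (div_pos hw hc0))).le
  · have hwc : 0 < w / c := div_pos hw hc0
    have := hφ_le _ hwc
    rw [mul_div_cancel₀ w hc0.ne'] at this
    simp only
    rw [mul_div_assoc', div_le_div_iff₀ (mul_pos hw (hφ_pos _ hwc)) (mul_pos hw (hφ_pos _ hw))]
    nlinarith [mul_le_mul_of_nonneg_left this (mul_nonneg (hh_nonneg w hw.le) hw.le)]

noncomputable def aseIntegral (b : ℝ) : ℝ :=
  ∫ z in Ioi 0, (1 - exp (-(b * z))) / (z * paperF z 4)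

theorem commASE_eq (Mt J Q K L : ℕ) :
    commASE Mt J Q K L =
      K * aseIntegral ((L + 1) / 2 * ((Mt - J * (Q - 1) + 1 - K * L) / K)) := by
  simp only [commASE, aseIntegral]
  congr 2 with z
  ring_nf

theorem aseIntegral_nonneg {b : ℝ} (hb : 0 ≤ b) : 0 ≤ aseIntegral b :=
  setIntegral_nonneg measurableSet_Ioi fun z hz =>
    div_nonneg (sub_nonneg.mpr (exp_le_one_iff.mpr (by nlinarith [mem_Ioi.mp hz])))
      (mul_pos hz (paperF_pos (le_of_lt hz))).le

theorem aseIntegral_mul_le {b c : ℝ} (hb : 0 ≤ b) (hc : 1 ≤ c) :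
    aseIntegral (c * b) ≤ √c * aseIntegral b := by
  have hh : Monotone fun w => 1 - exp (-(b * w)) := fun v w hvw => by
    simp only [sub_le_sub_iff_left, exp_le_exp, neg_le_neg_iff]
    exact mul_le_mul_of_nonneg_left hvw hb
  have h := setIntegral_Ioi_comp_mul_div_le hc (measurable_paperF (α := 4) (by norm_num))
    (fun _ hz => paperF_pos hz.le) (fun _ hz => paperF_mul_le (by norm_num) hc hz) hh (by simp)
  rw [sqrt_eq_rpow, show (1 / 2 : ℝ) = 2 / 4 by norm_num]
  simpa only [aseIntegral, mul_left_comm b c, mul_assoc] using h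

theorem commASE_max_at_L_one_general
    (Mt J Q : ℕ) :
    ∀ K L : ℕ, 0 < K → 0 < L → K * L + J * (Q - 1) ≤ Mt →
      ∃ K' : ℕ, 0 < K' ∧ K' + J * (Q - 1) ≤ Mt ∧
        commASE Mt J Q K L ≤ commASE Mt J Q K' 1 := by
  intro K L hK hL hKL
  refine ⟨K * L, Nat.mul_pos hK hL, hKL, ?_⟩
  set A : ℝ := Mt - J * (Q - 1) + 1
  have hK' : (0 : ℝ) < K := by exact_mod_cast hK
  have hL' : (1 : ℝ) ≤ L := by exact_mod_cast hL
  -- `Q - 1` is truncated in `ℕ` but not in `ℝ`, so only this inequality survives the cast.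
  have hQ : (Q : ℝ) - 1 ≤ ((Q - 1 : ℕ) : ℝ) := by
    rw [sub_le_iff_le_add]; exact_mod_cast (by omega : Q ≤ Q - 1 + 1)
  have hrate : 0 ≤ (A - K * L) / (K * L) := by
    have hKL' : ((K * L + J * (Q - 1) : ℕ) : ℝ) ≤ Mt := by exact_mod_cast hKL
    push_cast at hKL'
    have hJQ := mul_le_mul_of_nonneg_left hQ (Nat.cast_nonneg J)
    exact div_nonneg (by linarith) (by positivity)
  have hsqrt : √(L * (L + 1) / 2 : ℝ) ≤ L := by
    rw [sqrt_le_left (by positivity)]; nlinarith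
  rw [commASE_eq, commASE_eq]
  push_cast
  calc K * aseIntegral ((L + 1) / 2 * ((A - K * L) / K))
      = K * aseIntegral (L * (L + 1) / 2 * ((A - K * L) / (K * L))) := by
        congr 2; field_simp
    _ ≤ K * (√(L * (L + 1) / 2 : ℝ) * aseIntegral ((A - K * L) / (K * L))) := by
        gcongr; exact aseIntegral_mul_le hrate (by nlinarith)
    _ ≤ K * (L * aseIntegral ((A - K * L) / (K * L))) := by
        gcongr; exact aseIntegral_nonneg hrate
    _ = K * L * aseIntegral ((1 + 1) / 2 * ((A - K * L * 1) / (K * L))) := by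
        norm_num [mul_assoc]

/-- **Proposition 2.** With pathloss exponent `α = 4`, for every feasible
pair `(K, L)` (positive integers with `K·L + J(Q−1) ≤ M_t`) there is a feasible `K′`
(a positive integer with `K′ + J(Q−1) ≤ M_t`) such that `T(K′, 1) ≥ T(K, L)`: the maximum
of the communication ASE is attained with cluster size `L = 1` (no interference nulling). -/
theorem commASE_max_at_L_one
    (Mt J Q : ℕ) (hMt : 0 < Mt) (hJ : 0 < J) (hQ : 0 < Q)
    (hfeas : J * (Q - 1) + 1 ≤ Mt) :
    ∀ K L : ℕ, 0 < K → 0 < L → K * L + J * (Q - 1) ≤ Mt →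
      ∃ K' : ℕ, 0 < K' ∧ K' + J * (Q - 1) ≤ Mt ∧
        commASE Mt J Q K L ≤ commASE Mt J Q K' 1 :=
  commASE_max_at_L_one_general Mt J Q
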